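/- Let λ, μ > 0. Then for every k ∈ ℤ and t ≥ 0 the probability of occupying an even state satisfies: Σ_{j∈ℤ} p_{2k,2j}(t;λ,μ) = μ/(λ+μ) + (λ/(λ+μ))·e^{−2(λ+μ)t} and Σ_{j∈ℤ} p_{2k+1,2j}(t;λ,μ) = μ/(λ+μ) − (μ/(λ+μ))·e^{−2(λ+μ)t}. -/
import Mathlib


open scoped BigOperators

/-- Inner binomial sum `∑_{k=0}^{n-m} C(n,k) C(n,k+m) ρ^{-2k-m}`. -/
noncomputable def innerSum (ρ : ℝ) (m n : ℕ) : ℝ :=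
  ∑ k ∈ Finset.range (n - m + 1),
    (n.choose k : ℝ) * (n.choose (k + m) : ℝ) * ρ ^ (-(2 * (k : ℤ) + (m : ℤ)))

/-- Series `∑_{n≥m} [x^{2n}/(2n)! + c·x^{2n+1}/(2n+1)!]·innerSum ρ m n`. -/
noncomputable def evenSeries (x c ρ : ℝ) (m : ℕ) : ℝ :=
  ∑' j : ℕ,
    ((x ^ (2 * (m + j)) / (2 * (m + j)).factorial) +
      c * (x ^ (2 * (m + j) + 1) / (2 * (m + j) + 1).factorial)) * innerSum ρ m (m + j)

/-- Series `∑_{n≥m} x^{2n+1}/(2n+1)!·innerSum ρ m n`. -/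
noncomputable def oddSeries (x ρ : ℝ) (m : ℕ) : ℝ :=
  ∑' j : ℕ,
    (x ^ (2 * (m + j) + 1) / (2 * (m + j) + 1).factorial) * innerSum ρ m (m + j)

/-- `p_{2l,2r}(t;λ,μ)`. -/
noncomputable def pEE (lam mu t : ℝ) (l r : ℤ) : ℝ :=
  Real.exp (-(lam + mu) * t) *
    evenSeries (lam * t) ((mu - lam) / lam) (lam / mu) (r - l).natAbs

/-- `p_{2l,2r+1}(t;λ,μ)`. -/
noncomputable def pEO (lam mu t : ℝ) (l r : ℤ) : ℝ :=
  Real.exp (-(lam + mu) * t) *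
    (oddSeries (lam * t) (lam / mu) (r - l).natAbs +
      oddSeries (lam * t) (lam / mu) (r - l + 1).natAbs)

/-- `p_{2l+1,2r}(t;λ,μ)`. -/
noncomputable def pOE (lam mu t : ℝ) (l r : ℤ) : ℝ :=
  Real.exp (-(lam + mu) * t) *
    (oddSeries (mu * t) (mu / lam) (r - l - 1).natAbs +
      oddSeries (mu * t) (mu / lam) (r - l).natAbs)

/-- `p_{2l+1,2r+1}(t;λ,μ)`. -/
noncomputable def pOO (lam mu t : ℝ) (l r : ℤ) : ℝ :=
  Real.exp (-(lam + mu) * t) *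
    evenSeries (mu * t) ((lam - mu) / mu) (mu / lam) (r - l).natAbs

/-- Transition probability `p_{k,n}(t;λ,μ)`, by parity of the states. -/
noncomputable def transP (lam mu t : ℝ) (k n : ℤ) : ℝ :=
  if k % 2 = 0 then
    if n % 2 = 0 then pEE lam mu t (k / 2) (n / 2)
    else pEO lam mu t (k / 2) ((n - 1) / 2)
  else
    if n % 2 = 0 then pOE lam mu t ((k - 1) / 2) (n / 2)
    else pOO lam mu t ((k - 1) / 2) ((n - 1) / 2)

/-- `h(z) = √((μz²+λ)(λz²+μ))`. -/
noncomputable def hFun (lam mu z : ℝ) : ℝ := Real.sqrt ((mu * z ^ 2 + lam) * (lam * z ^ 2 + mu))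

lemma innerSum_eq (ρ : ℝ) (m n : ℕ) :
    innerSum ρ m n = ∑ k ∈ Finset.range (n - m + 1),
      (n.choose k : ℝ) * (n.choose (k + m) : ℝ) * (ρ⁻¹) ^ (2 * k + m) := by
  unfold innerSum
  refine Finset.sum_congr rfl fun k _ => ?_
  rw [show (-(2 * (k : ℤ) + (m : ℤ))) = -((2 * k + m : ℕ) : ℤ) by push_cast; ring,
    zpow_neg, zpow_natCast, ← inv_pow]

lemma innerSum_of_lt (ρ : ℝ) {m n : ℕ} (h : n < m) : innerSum ρ m n = 0 := by
  rw [innerSum_eq, Nat.sub_eq_zero_of_le h.le]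
  simp [Nat.choose_eq_zero_of_lt (show n < 0 + m by omega), Nat.choose_eq_zero_iff]
  exact Or.inl h

lemma innerSum_nonneg {ρ : ℝ} (hρ : 0 ≤ ρ) (m n : ℕ) : 0 ≤ innerSum ρ m n := by
  rw [innerSum_eq]
  apply Finset.sum_nonneg
  intro k _
  have : (0:ℝ) ≤ ρ⁻¹ := by positivity
  positivity

lemma innerSum_eq_range_succ (ρ : ℝ) {m n : ℕ} (h : m ≤ n) :
    innerSum ρ m n = ∑ k ∈ Finset.range (n + 1),
      (n.choose k : ℝ) * (n.choose (k + m) : ℝ) * (ρ⁻¹) ^ (2 * k + m) := by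
  rw [innerSum_eq]
  apply Finset.sum_subset
  · intro k hk; simp only [Finset.mem_range] at *; omega
  · intro k hk hk2
    simp only [Finset.mem_range] at hk hk2
    rw [Nat.choose_eq_zero_of_lt (show n < k + m by omega)]
    ring

lemma sum_innerSum_Icc (ρ : ℝ) (n : ℕ) :
    ∑ m ∈ Finset.Icc (-(n:ℤ)) n, innerSum ρ m.natAbs n = (1 + ρ⁻¹) ^ (2 * n) := by
  set y := ρ⁻¹ with hy
  have hrhs : (1 + y) ^ (2 * n) =
      ∑ p ∈ Finset.range (n+1) ×ˢ Finset.range (n+1),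
        (n.choose p.1 : ℝ) * (n.choose p.2 : ℝ) * y ^ (p.1 + p.2) := by
    have hbin : (1 + y) ^ n = ∑ a ∈ Finset.range (n+1), (n.choose a : ℝ) * y ^ a := by
      rw [add_comm, add_pow]
      exact Finset.sum_congr rfl fun a _ => by ring
    rw [two_mul, pow_add, hbin, Finset.sum_mul_sum, Finset.sum_product]
    exact Finset.sum_congr rfl fun a _ => Finset.sum_congr rfl fun b _ => by ring
  rw [hrhs]
  have hlhs : ∀ m ∈ Finset.Icc (-(n:ℤ)) n, innerSum ρ m.natAbs n =
      ∑ k ∈ Finset.range (n+1),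
        (n.choose k : ℝ) * (n.choose (k + m.natAbs) : ℝ) * y ^ (2 * k + m.natAbs) := by
    intro m hm
    simp only [Finset.mem_Icc] at hm
    exact innerSum_eq_range_succ ρ (by omega)
  rw [Finset.sum_congr rfl hlhs, ← Finset.sum_product']
  rw [← Finset.sum_filter_of_ne (p := fun p : ℤ × ℕ => p.2 + p.1.natAbs ≤ n)
    (by
      intro p hp hne
      by_contra hgt
      apply hne
      rw [Nat.choose_eq_zero_of_lt (show n < p.2 + p.1.natAbs by omega)]
      ring)]
  refine Finset.sum_nbij' (fun p => (p.2 + (-p.1).toNat, p.2 + p.1.toNat))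
    (fun q => ((q.2 : ℤ) - q.1, min q.1 q.2)) ?_ ?_ ?_ ?_ ?_
  · intro p hp
    simp only [Finset.mem_filter, Finset.mem_product, Finset.mem_Icc, Finset.mem_range] at hp ⊢
    omega
  · intro q hq
    simp only [Finset.mem_filter, Finset.mem_product, Finset.mem_Icc, Finset.mem_range] at hq ⊢
    omega
  · intro p hp
    simp only [Finset.mem_filter, Finset.mem_product, Finset.mem_Icc, Finset.mem_range] at hp
    refine Prod.ext ?_ ?_ <;> simp <;> omega
  · intro q hq
    simp only [Finset.mem_filter, Finset.mem_product, Finset.mem_Icc, Finset.mem_range] at hq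
    refine Prod.ext ?_ ?_ <;> simp <;> omega
  · intro p hp
    simp only [Finset.mem_filter, Finset.mem_product, Finset.mem_Icc, Finset.mem_range] at hp
    obtain ⟨m, k⟩ := p
    rcases le_or_gt 0 m with hm0 | hm0
    · have e1 : (-m).toNat = 0 := by omega
      have e2 : m.toNat = m.natAbs := by omega
      simp only [e1, e2, add_zero]
      ring
    · have e1 : (-m).toNat = m.natAbs := by omega
      have e2 : m.toNat = 0 := by omega
      simp only [e1, e2, add_zero]
      ring

lemma innerSum_le {ρ : ℝ} (hρ : 0 ≤ ρ) (m : ℤ) (n : ℕ) :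
    innerSum ρ m.natAbs n ≤ (1 + ρ⁻¹) ^ (2 * n) := by
  rcases le_or_gt m.natAbs n with h | h
  · rw [← sum_innerSum_Icc ρ n]
    refine Finset.single_le_sum (f := fun m' : ℤ => innerSum ρ m'.natAbs n) ?_ ?_
    · exact fun m' _ => innerSum_nonneg hρ _ _
    · simp only [Finset.mem_Icc]; omega
  · rw [innerSum_of_lt ρ h]
    have : (0:ℝ) ≤ ρ⁻¹ := by positivity
    positivity

lemma tsum_innerSum {ρ : ℝ} (hρ : 0 ≤ ρ) (n : ℕ) :
    ∑' m : ℤ, innerSum ρ m.natAbs n = (1 + ρ⁻¹) ^ (2 * n) := by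
  rw [← sum_innerSum_Icc ρ n]
  apply tsum_eq_sum
  intro m hm
  simp only [Finset.mem_Icc] at hm
  exact innerSum_of_lt ρ (by omega)

lemma two_n_one_le_four_pow (n : ℕ) : 2 * n + 1 ≤ 4 ^ n := by
  induction n with
  | zero => norm_num
  | succ n ih =>
    have h4 : 4 ^ (n + 1) = 4 * 4 ^ n := by ring
    omega


lemma auxSummable {u : ℝ} (hu : 0 ≤ u) :
    Summable fun n : ℕ => (2 * (n:ℝ) + 1) * u ^ (2 * n) / (2 * n).factorial := by
  have hsum : Summable fun n : ℕ => (4 * u ^ 2) ^ n / n.factorial :=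
    Real.summable_pow_div_factorial (4 * u ^ 2)
  apply Summable.of_nonneg_of_le _ _ hsum
  · intro n
    positivity
  · intro n
    rw [pow_mul, mul_pow]
    have h1 : (2 * (n:ℝ) + 1) ≤ 4 ^ n := by exact_mod_cast two_n_one_le_four_pow n
    have h2 : (n.factorial : ℝ) ≤ ((2 * n).factorial : ℝ) := by
      exact_mod_cast Nat.factorial_le (by omega)
    have hfp : (0:ℝ) < n.factorial := by positivity
    have hfp2 : (0:ℝ) < ((2*n).factorial : ℝ) := by positivity
    rw [div_le_div_iff₀ hfp2 hfp]
    have hu2 : (0:ℝ) ≤ (u^2)^n := by positivity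
    nlinarith [mul_le_mul h1 (le_refl ((u^2)^n)) hu2 (by positivity : (0:ℝ) ≤ (4:ℝ)^n),
      mul_le_mul_of_nonneg_left h2 (mul_nonneg (by positivity : (0:ℝ) ≤ (4:ℝ)^n) hu2)]

lemma keyLemma (ρ : ℝ) (hρ : 0 ≤ ρ) (a : ℕ → ℝ)
    (ha : Summable fun n : ℕ => (2 * (n:ℝ) + 1) * |a n| * (1 + ρ⁻¹) ^ (2 * n)) :
    (∑' m : ℤ, ∑' j : ℕ, a (m.natAbs + j) * innerSum ρ m.natAbs (m.natAbs + j))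
        = ∑' n : ℕ, a n * (1 + ρ⁻¹) ^ (2 * n) ∧
      Summable fun m : ℤ => ∑' j : ℕ, a (m.natAbs + j) * innerSum ρ m.natAbs (m.natAbs + j) := by
  set G : ℤ × ℕ → ℝ := fun p => a p.2 * innerSum ρ p.1.natAbs p.2 with hG
  have hzero : ∀ n : ℕ, ∀ m : ℤ, m ∉ Finset.Icc (-(n:ℤ)) n → |G (m, n)| = 0 := by
    intro n m hm
    simp only [Finset.mem_Icc] at hm
    simp [hG, innerSum_of_lt ρ (show n < m.natAbs by omega)]
  have hslice : ∀ n : ℕ, Summable fun m : ℤ => |G (m, n)| := fun n =>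
    summable_of_ne_finset_zero (s := Finset.Icc (-(n:ℤ)) n) (hzero n)
  have htsum_le : ∀ n : ℕ, (∑' m : ℤ, |G (m, n)|) ≤
      (2 * (n:ℝ) + 1) * |a n| * (1 + ρ⁻¹) ^ (2 * n) := by
    intro n
    rw [tsum_eq_sum (hzero n)]
    have hcard : (Finset.Icc (-(n:ℤ)) n).card = 2 * n + 1 := by
      rw [Int.card_Icc]; omega
    calc ∑ m ∈ Finset.Icc (-(n:ℤ)) n, |G (m, n)|
        ≤ (Finset.Icc (-(n:ℤ)) n).card • (|a n| * (1 + ρ⁻¹) ^ (2 * n)) := by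
          apply Finset.sum_le_card_nsmul
          intro m _
          have h1 : |G (m, n)| = |a n| * innerSum ρ m.natAbs n := by
            rw [hG, abs_mul, abs_of_nonneg (innerSum_nonneg hρ _ _)]
          rw [h1]
          exact mul_le_mul_of_nonneg_left (innerSum_le hρ m n) (abs_nonneg _)
      _ = (2 * (n:ℝ) + 1) * |a n| * (1 + ρ⁻¹) ^ (2 * n) := by
          rw [hcard, nsmul_eq_mul]
          push_cast
          ring
  have hGabs2 : Summable fun q : ℕ × ℤ => |G (q.2, q.1)| := by
    rw [summable_prod_of_nonneg (fun q => abs_nonneg _)]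
    refine ⟨fun n => hslice n, ?_⟩
    exact Summable.of_nonneg_of_le (fun n => tsum_nonneg fun m => abs_nonneg _) htsum_le ha
  have hGabs : Summable fun p : ℤ × ℕ => |G p| :=
    (Equiv.prodComm ℕ ℤ).summable_iff.mp hGabs2
  have hGsum : Summable G := summable_abs_iff.mp hGabs
  have hperm : ∀ m : ℤ, (∑' j : ℕ, a (m.natAbs + j) * innerSum ρ m.natAbs (m.natAbs + j))
      = ∑' n : ℕ, G (m, n) := by
    intro m
    have : ∀ j : ℕ, a (m.natAbs + j) * innerSum ρ m.natAbs (m.natAbs + j)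
        = G (m, m.natAbs + j) := fun j => rfl
    simp_rw [this]
    refine Function.Injective.tsum_eq (g := fun j : ℕ => m.natAbs + j)
      (f := fun n : ℕ => G (m, n)) (fun i j h => by simpa using h) ?_
    intro n hn
    simp only [Function.mem_support, ne_eq] at hn
    rcases le_or_gt m.natAbs n with h | h
    · exact ⟨n - m.natAbs, by simp; omega⟩
    · exfalso; exact hn (by simp [hG, innerSum_of_lt ρ h])
  have hpern : ∀ n : ℕ, (∑' m : ℤ, G (m, n)) = a n * (1 + ρ⁻¹) ^ (2 * n) := by
    intro n
    rw [show (fun m : ℤ => G (m, n)) = fun m : ℤ => a n * innerSum ρ m.natAbs n from rfl]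
    rw [tsum_mul_left, tsum_innerSum hρ n]
  constructor
  · calc (∑' m : ℤ, ∑' j : ℕ, a (m.natAbs + j) * innerSum ρ m.natAbs (m.natAbs + j))
        = ∑' m : ℤ, ∑' n : ℕ, G (m, n) := tsum_congr hperm
      _ = ∑' n : ℕ, ∑' m : ℤ, G (m, n) :=
          (Summable.tsum_comm (f := fun (m : ℤ) (n : ℕ) => G (m, n)) hGsum).symm
      _ = ∑' n : ℕ, a n * (1 + ρ⁻¹) ^ (2 * n) := tsum_congr hpern
  · exact (hGsum.prod).congr fun m => (hperm m).symm

lemma coefBound {A B c : ℝ} (hA : 0 ≤ A) (hB : 0 ≤ B) (n : ℕ) :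
    (2 * (n:ℝ) + 1) * |A ^ (2*n) / (2*n).factorial + c * (A ^ (2*n+1) / (2*n+1).factorial)|
        * B ^ (2*n)
      ≤ (1 + |c| * A) * ((2 * (n:ℝ) + 1) * (A*B) ^ (2*n) / (2*n).factorial) := by
  have hF : (0:ℝ) < (2*n).factorial := by positivity
  have hF2 : (0:ℝ) < ((2*n+1).factorial : ℝ) := by positivity
  have hstep : A ^ (2*n+1) / (2*n+1).factorial ≤ A * (A ^ (2*n) / (2*n).factorial) := by
    rw [pow_succ, mul_comm (A ^ (2*n)) A, mul_div_assoc]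
    apply mul_le_mul_of_nonneg_left _ hA
    apply div_le_div_of_nonneg_left (by positivity) hF
    exact_mod_cast Nat.factorial_le (by omega)
  have habs : |A ^ (2*n) / (2*n).factorial + c * (A ^ (2*n+1) / (2*n+1).factorial)|
      ≤ (1 + |c| * A) * (A ^ (2*n) / (2*n).factorial) := by
    calc |A ^ (2*n) / (2*n).factorial + c * (A ^ (2*n+1) / (2*n+1).factorial)|
        ≤ |A ^ (2*n) / (2*n).factorial| + |c * (A ^ (2*n+1) / (2*n+1).factorial)| := abs_add_le _ _
      _ = A ^ (2*n) / (2*n).factorial + |c| * (A ^ (2*n+1) / (2*n+1).factorial) := by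
          rw [abs_of_nonneg (div_nonneg (pow_nonneg hA _) hF.le), abs_mul,
            abs_of_nonneg (div_nonneg (pow_nonneg hA _) hF2.le)]
      _ ≤ A ^ (2*n) / (2*n).factorial + |c| * (A * (A ^ (2*n) / (2*n).factorial)) := by
          have := mul_le_mul_of_nonneg_left hstep (abs_nonneg c)
          linarith
      _ = (1 + |c| * A) * (A ^ (2*n) / (2*n).factorial) := by ring
  calc (2 * (n:ℝ) + 1) * |A ^ (2*n) / (2*n).factorial + c * (A ^ (2*n+1) / (2*n+1).factorial)|
        * B ^ (2*n)
      ≤ (2 * (n:ℝ) + 1) * ((1 + |c| * A) * (A ^ (2*n) / (2*n).factorial)) * B ^ (2*n) := by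
        apply mul_le_mul_of_nonneg_right _ (by positivity)
        apply mul_le_mul_of_nonneg_left habs (by positivity)
    _ = (1 + |c| * A) * ((2 * (n:ℝ) + 1) * (A*B) ^ (2*n) / (2*n).factorial) := by
        rw [mul_pow]; ring

lemma evenMain (lam mu t : ℝ) (hlam : 0 < lam) (hmu : 0 < mu) (ht : 0 ≤ t) :
    (∑' m : ℤ, evenSeries (lam * t) ((mu - lam) / lam) (lam / mu) m.natAbs)
        = Real.cosh ((lam+mu)*t) + ((mu-lam)/(lam+mu)) * Real.sinh ((lam+mu)*t) ∧
      Summable fun m : ℤ => evenSeries (lam * t) ((mu - lam) / lam) (lam / mu) m.natAbs := by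
  set A := lam * t with hA
  set c := (mu - lam) / lam with hc
  set ρ := lam / mu with hρdef
  have hA0 : 0 ≤ A := by positivity
  have hρ : (0:ℝ) ≤ ρ := by positivity
  have hB : 1 + ρ⁻¹ = (lam + mu) / lam := by
    rw [hρdef, inv_div]
    field_simp
  have hB0 : (0:ℝ) ≤ (lam + mu) / lam := by positivity
  have hu : 0 ≤ (lam + mu) * t := by positivity
  have hAB : A * ((lam + mu) / lam) = (lam + mu) * t := by
    rw [hA]; field_simp
  set aE : ℕ → ℝ := fun n => A ^ (2*n) / (2*n).factorial
      + c * (A ^ (2*n+1) / (2*n+1).factorial) with haE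
  have hse : ∀ m : ℕ, evenSeries A c ρ m
      = ∑' j : ℕ, aE (m + j) * innerSum ρ m (m + j) := fun m => rfl
  have ha : Summable fun n : ℕ => (2*(n:ℝ)+1) * |aE n| * (1 + ρ⁻¹) ^ (2*n) := by
    apply Summable.of_nonneg_of_le (fun n => by positivity) (fun n => ?_)
      ((auxSummable hu).mul_left (1 + |c| * A))
    rw [hB]
    have := coefBound (c := c) hA0 hB0 n
    rw [hAB] at this
    exact this
  obtain ⟨hval, hsumm⟩ := keyLemma ρ hρ aE ha
  have hcongr : (∑' m : ℤ, evenSeries A c ρ m.natAbs)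
      = ∑' m : ℤ, ∑' j : ℕ, aE (m.natAbs + j) * innerSum ρ m.natAbs (m.natAbs + j) :=
    tsum_congr fun m => hse m.natAbs
  have hper : ∀ n : ℕ, aE n * (1 + ρ⁻¹) ^ (2*n)
      = ((lam+mu)*t) ^ (2*n) / (2*n).factorial
        + ((mu-lam)/(lam+mu)) * (((lam+mu)*t) ^ (2*n+1) / (2*n+1).factorial) := by
    intro n
    rw [hB]
    have hcA : c * A = ((mu-lam)/(lam+mu)) * ((lam+mu)*t) := by
      rw [hc, hA]; field_simp
    have gen : ∀ a b : ℝ, (a ^ (2*n) / (2*n).factorial + c * (a ^ (2*n+1) / (2*n+1).factorial))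
        * b ^ (2*n)
        = (a*b) ^ (2*n) / (2*n).factorial + (c * a) * ((a*b) ^ (2*n) / (2*n+1).factorial) := by
      intro a b
      rw [mul_pow, pow_succ]
      ring
    calc aE n * ((lam+mu)/lam) ^ (2*n)
        = (A * ((lam+mu)/lam)) ^ (2*n) / (2*n).factorial
          + (c * A) * ((A * ((lam+mu)/lam)) ^ (2*n) / (2*n+1).factorial) := by
          simp only [haE]; exact gen A ((lam+mu)/lam)
      _ = ((lam+mu)*t) ^ (2*n) / (2*n).factorial
          + (((mu-lam)/(lam+mu)) * ((lam+mu)*t)) * (((lam+mu)*t) ^ (2*n) / (2*n+1).factorial) := by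
          rw [hAB, hcA]
      _ = ((lam+mu)*t) ^ (2*n) / (2*n).factorial
          + ((mu-lam)/(lam+mu)) * (((lam+mu)*t) ^ (2*n+1) / (2*n+1).factorial) := by
          rw [pow_succ]; ring
  refine ⟨?_, hsumm.congr fun m => (hse m.natAbs).symm⟩
  rw [hcongr, hval, tsum_congr hper,
    Summable.tsum_add (Real.hasSum_cosh ((lam+mu)*t)).summable
      ((Real.hasSum_sinh ((lam+mu)*t)).summable.mul_left ((mu-lam)/(lam+mu))),
    tsum_mul_left, ← Real.cosh_eq_tsum, ← Real.sinh_eq_tsum]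

lemma oddMain (lam mu t : ℝ) (hlam : 0 < lam) (hmu : 0 < mu) (ht : 0 ≤ t) :
    (∑' m : ℤ, oddSeries (mu * t) (mu / lam) m.natAbs)
        = (mu/(lam+mu)) * Real.sinh ((lam+mu)*t) ∧
      Summable fun m : ℤ => oddSeries (mu * t) (mu / lam) m.natAbs := by
  set A := mu * t with hA
  set ρ := mu / lam with hρdef
  have hA0 : 0 ≤ A := by positivity
  have hρ : (0:ℝ) ≤ ρ := by positivity
  have hB : 1 + ρ⁻¹ = (lam + mu) / mu := by
    rw [hρdef, inv_div]
    field_simp; ring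
  have hB0 : (0:ℝ) ≤ (lam + mu) / mu := by positivity
  have hu : 0 ≤ (lam + mu) * t := by positivity
  have hAB : A * ((lam + mu) / mu) = (lam + mu) * t := by
    rw [hA]; field_simp
  set aO : ℕ → ℝ := fun n => A ^ (2*n+1) / (2*n+1).factorial with haO
  have hse : ∀ m : ℕ, oddSeries A ρ m
      = ∑' j : ℕ, aO (m + j) * innerSum ρ m (m + j) := fun m => rfl
  have ha : Summable fun n : ℕ => (2*(n:ℝ)+1) * |aO n| * (1 + ρ⁻¹) ^ (2*n) := by
    apply Summable.of_nonneg_of_le (fun n => by positivity) (fun n => ?_)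
      ((auxSummable hu).mul_left (1 + |(1:ℝ)| * A))
    rw [hB]
    have := coefBound (c := (1:ℝ)) (A := A) (B := (lam+mu)/mu) hA0 hB0 n
    rw [hAB] at this
    calc (2*(n:ℝ)+1) * |aO n| * ((lam+mu)/mu) ^ (2*n)
        ≤ (2*(n:ℝ)+1) * |A ^ (2*n) / (2*n).factorial
            + 1 * (A ^ (2*n+1) / (2*n+1).factorial)| * ((lam+mu)/mu) ^ (2*n) := by
          apply mul_le_mul_of_nonneg_right _ (by positivity)
          apply mul_le_mul_of_nonneg_left _ (by positivity)
          rw [haO]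
          rw [abs_of_nonneg (by positivity), abs_of_nonneg (by positivity)]
          have : (0:ℝ) ≤ A ^ (2*n) / (2*n).factorial := by positivity
          linarith
      _ ≤ (1 + |(1:ℝ)| * A) * ((2*(n:ℝ)+1) * (((lam+mu)*t)) ^ (2*n) / (2*n).factorial) := this
  obtain ⟨hval, hsumm⟩ := keyLemma ρ hρ aO ha
  have hcongr : (∑' m : ℤ, oddSeries A ρ m.natAbs)
      = ∑' m : ℤ, ∑' j : ℕ, aO (m.natAbs + j) * innerSum ρ m.natAbs (m.natAbs + j) :=
    tsum_congr fun m => hse m.natAbs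
  have hper : ∀ n : ℕ, aO n * (1 + ρ⁻¹) ^ (2*n)
      = (mu/(lam+mu)) * (((lam+mu)*t) ^ (2*n+1) / (2*n+1).factorial) := by
    intro n
    rw [hB]
    have hcA : A = (mu/(lam+mu)) * ((lam+mu)*t) := by
      rw [hA]; field_simp
    have gen : ∀ a b : ℝ, (a ^ (2*n+1) / (2*n+1).factorial) * b ^ (2*n)
        = a * ((a*b) ^ (2*n) / (2*n+1).factorial) := by
      intro a b
      rw [mul_pow, pow_succ]
      ring
    calc aO n * ((lam+mu)/mu) ^ (2*n)
        = A * ((A * ((lam+mu)/mu)) ^ (2*n) / (2*n+1).factorial) := by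
          simp only [haO]; exact gen A ((lam+mu)/mu)
      _ = ((mu/(lam+mu)) * ((lam+mu)*t)) * (((lam+mu)*t) ^ (2*n) / (2*n+1).factorial) := by
          rw [hAB, ← hcA]
      _ = (mu/(lam+mu)) * (((lam+mu)*t) ^ (2*n+1) / (2*n+1).factorial) := by
          rw [pow_succ]; ring
  refine ⟨?_, hsumm.congr fun m => (hse m.natAbs).symm⟩
  rw [hcongr, hval, tsum_congr hper, tsum_mul_left, ← Real.sinh_eq_tsum]

/-- Probability of occupying an even state at time `t`, for even and odd initial states. -/
theorem even_state_probability (lam mu : ℝ) (hlam : 0 < lam) (hmu : 0 < mu)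
    (k : ℤ) (t : ℝ) (ht : 0 ≤ t) :
    ∑' j : ℤ, transP lam mu t (2 * k) (2 * j) =
      mu / (lam + mu) + (lam / (lam + mu)) * Real.exp (-2 * (lam + mu) * t) ∧
    ∑' j : ℤ, transP lam mu t (2 * k + 1) (2 * j) =
      mu / (lam + mu) - (mu / (lam + mu)) * Real.exp (-2 * (lam + mu) * t) := by
  have hs : (0:ℝ) < lam + mu := by linarith
  set X := Real.exp ((lam + mu) * t) with hXdef
  have hX : 0 < X := Real.exp_pos _
  have hEX : Real.exp (-(lam + mu) * t) = X⁻¹ := by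
    rw [hXdef, ← Real.exp_neg]; ring_nf
  have hE2 : Real.exp (-2 * (lam + mu) * t) = (X⁻¹) ^ 2 := by
    rw [hXdef, ← Real.exp_neg, sq, ← Real.exp_add]; congr 1; ring
  have hcosh : Real.cosh ((lam + mu) * t) = (X + X⁻¹) / 2 := by
    rw [Real.cosh_eq, hXdef, Real.exp_neg]
  have hsinh : Real.sinh ((lam + mu) * t) = (X - X⁻¹) / 2 := by
    rw [Real.sinh_eq, hXdef, Real.exp_neg]
  constructor
  · have hT : ∀ j : ℤ, transP lam mu t (2 * k) (2 * j) = pEE lam mu t k j := by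
      intro j
      simp only [transP]
      rw [if_pos (by omega), if_pos (by omega),
        show (2 * k) / 2 = k by omega, show (2 * j) / 2 = j by omega]
    have hpEE : ∀ j : ℤ, pEE lam mu t k j = Real.exp (-(lam + mu) * t) *
        evenSeries (lam * t) ((mu - lam) / lam) (lam / mu) (j - k).natAbs := fun j => rfl
    obtain ⟨hval, _⟩ := evenMain lam mu t hlam hmu ht
    calc ∑' j : ℤ, transP lam mu t (2 * k) (2 * j)
        = ∑' j : ℤ, Real.exp (-(lam + mu) * t) *
            evenSeries (lam * t) ((mu - lam) / lam) (lam / mu) (j - k).natAbs :=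
          tsum_congr fun j => (hT j).trans (hpEE j)
      _ = Real.exp (-(lam + mu) * t) *
            ∑' j : ℤ, evenSeries (lam * t) ((mu - lam) / lam) (lam / mu) (j - k).natAbs :=
          tsum_mul_left
      _ = Real.exp (-(lam + mu) * t) *
            ∑' m : ℤ, evenSeries (lam * t) ((mu - lam) / lam) (lam / mu) m.natAbs := by
          congr 1
          have h := (Equiv.subRight k).tsum_eq
            (f := fun m : ℤ => evenSeries (lam * t) ((mu - lam) / lam) (lam / mu) m.natAbs)
          simpa [Equiv.subRight_apply] using h
      _ = mu / (lam + mu) + (lam / (lam + mu)) * Real.exp (-2 * (lam + mu) * t) := by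
          rw [hval, hEX, hE2, hcosh, hsinh]
          field_simp
          ring
  · have hT : ∀ j : ℤ, transP lam mu t (2 * k + 1) (2 * j) = pOE lam mu t k j := by
      intro j
      simp only [transP]
      rw [if_neg (by omega), if_pos (by omega),
        show (2 * k + 1 - 1) / 2 = k by omega, show (2 * j) / 2 = j by omega]
    have hpOE : ∀ j : ℤ, pOE lam mu t k j = Real.exp (-(lam + mu) * t) *
        (oddSeries (mu * t) (mu / lam) (j - k - 1).natAbs +
          oddSeries (mu * t) (mu / lam) (j - k).natAbs) := fun j => rfl
    obtain ⟨hval, hsumm⟩ := oddMain lam mu t hlam hmu ht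
    have hsum1 : Summable fun j : ℤ => oddSeries (mu * t) (mu / lam) (j - (k + 1)).natAbs := by
      have h := ((Equiv.subRight (k + 1)).summable_iff
        (f := fun m : ℤ => oddSeries (mu * t) (mu / lam) m.natAbs)).mpr hsumm
      exact h.congr fun j => by simp [Equiv.subRight_apply]
    have hsum2 : Summable fun j : ℤ => oddSeries (mu * t) (mu / lam) (j - k).natAbs := by
      have h := ((Equiv.subRight k).summable_iff
        (f := fun m : ℤ => oddSeries (mu * t) (mu / lam) m.natAbs)).mpr hsumm
      exact h.congr fun j => by simp [Equiv.subRight_apply]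
    have ht1 : ∑' j : ℤ, oddSeries (mu * t) (mu / lam) (j - (k + 1)).natAbs
        = ∑' m : ℤ, oddSeries (mu * t) (mu / lam) m.natAbs := by
      have h := (Equiv.subRight (k + 1)).tsum_eq
        (f := fun m : ℤ => oddSeries (mu * t) (mu / lam) m.natAbs)
      simpa [Equiv.subRight_apply] using h
    have ht2 : ∑' j : ℤ, oddSeries (mu * t) (mu / lam) (j - k).natAbs
        = ∑' m : ℤ, oddSeries (mu * t) (mu / lam) m.natAbs := by
      have h := (Equiv.subRight k).tsum_eq
        (f := fun m : ℤ => oddSeries (mu * t) (mu / lam) m.natAbs)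
      simpa [Equiv.subRight_apply] using h
    calc ∑' j : ℤ, transP lam mu t (2 * k + 1) (2 * j)
        = ∑' j : ℤ, Real.exp (-(lam + mu) * t) *
            (oddSeries (mu * t) (mu / lam) (j - (k + 1)).natAbs +
              oddSeries (mu * t) (mu / lam) (j - k).natAbs) :=
          tsum_congr fun j => by rw [hT j, hpOE j, sub_sub]
      _ = Real.exp (-(lam + mu) * t) *
            (∑' j : ℤ, (oddSeries (mu * t) (mu / lam) (j - (k + 1)).natAbs +
              oddSeries (mu * t) (mu / lam) (j - k).natAbs)) := tsum_mul_left
      _ = Real.exp (-(lam + mu) * t) *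
            ((∑' j : ℤ, oddSeries (mu * t) (mu / lam) (j - (k + 1)).natAbs) +
              ∑' j : ℤ, oddSeries (mu * t) (mu / lam) (j - k).natAbs) := by
          rw [Summable.tsum_add hsum1 hsum2]
      _ = mu / (lam + mu) - (mu / (lam + mu)) * Real.exp (-2 * (lam + mu) * t) := by
          rw [ht1, ht2, hval, hEX, hE2, hsinh]
          field_simp
          ring
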